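/- arXiv:1203.6055 — 2 statements merged into one kernel-verified Lean document; each statement's English description precedes it below -/
import Mathlib

section
/- For all integers M, N, K (with y invertible), F_M(x,y)·F_N(x,y) − F_{M+K}(x,y)·F_{N−K}(x,y) = (−y)^{N−K} · F_{M+K−N}(x,y) · F_K(x,y). -/
/-- Bivariate Fibonacci polynomials. -/
def bF {K : Type*} [Field K] (x y : K) : ℕ → K
  | 0 => 0
  | 1 => 1
  | n + 2 => x * bF x y (n + 1) + y * bF x y n

/-- Bivariate Fibonacci polynomials extended to all integer indices:
F_{-n} = -(-y)^{-n} F_n. -/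
noncomputable def zF {K : Type*} [Field K] (x y : K) (n : ℤ) : K :=
  if 0 ≤ n then bF x y n.toNat else -((-y) ^ n) * bF x y (-n).toNat

/-!
`zF x y` solves the recurrence `u (n + 2) = x * u (n + 1) + y * u n` on all of `ℤ`, and for
`y ≠ 0` a solution is determined by `u 0` and `u 1`. This gives the addition formula
`F (n + k) = F k * F (n + 1) + y * F (k - 1) * F n`. Substituting it for `F (s + k)` and
`F (s + d + k)` collapses `F (s + d) * F (s + k) - F (s + d + k) * F s` to `F k` times the Casoratian
`F (s + 1) * F (s + d) - F s * F (s + d + 1)`, which is multiplied by `-y` at each step of `s` and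
hence equals `(-y) ^ s * F d`.
-/

lemma eq_zpow_mul_of_forall_add_one {G₀ : Type*} [GroupWithZero G₀] {c : G₀} (hc : c ≠ 0)
    {f : ℤ → G₀} (hf : ∀ n, f (n + 1) = c * f n) (n : ℤ) : f n = c ^ n * f 0 := by
  induction n using Int.induction_on with
  | zero => rw [zpow_zero, one_mul]
  | succ i ih => rw [hf, ih, ← mul_assoc, ← zpow_one_add₀ hc, add_comm]
  | pred i ih =>
    rw [← sub_add_cancel (-(i : ℤ)) 1, hf, add_comm _ (1 : ℤ), zpow_one_add₀ hc,
      mul_assoc] at ih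
    exact mul_left_cancel₀ hc ih

section Recurrence

variable {K : Type*} [Field K] {x y : K}

def IsFibRec (x y : K) (u : ℤ → K) : Prop :=
  ∀ n, u (n + 2) = x * u (n + 1) + y * u n

namespace IsFibRec

variable {u v : ℤ → K}

lemma comp_add_const (hu : IsFibRec x y u) (k : ℤ) : IsFibRec x y (fun n ↦ u (n + k)) := by
  intro n
  simpa only [add_right_comm _ k] using hu (n + k)

lemma mul_add_mul (hu : IsFibRec x y u) (hv : IsFibRec x y v) (a b : K) :
    IsFibRec x y (fun n ↦ a * u n + b * v n) := by
  intro n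
  linear_combination a * hu n + b * hv n

lemma ext_zero_one (hy : y ≠ 0) (hu : IsFibRec x y u) (hv : IsFibRec x y v)
    (h0 : u 0 = v 0) (h1 : u 1 = v 1) : u = v := by
  suffices h : ∀ n, u n = v n ∧ u (n + 1) = v (n + 1) from funext fun n ↦ (h n).1
  intro n
  induction n using Int.induction_on with
  | zero => exact ⟨h0, by rwa [zero_add]⟩
  | succ i ih =>
    refine ⟨ih.2, ?_⟩
    rw [add_assoc, one_add_one_eq_two, hu, hv, ih.1, ih.2]
  | pred i ih =>
    refine ⟨mul_left_cancel₀ hy ?_, by rw [sub_add_cancel]; exact ih.1⟩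
    have hu' := hu (-i - 1)
    have hv' := hv (-i - 1)
    rw [show -(i : ℤ) - 1 + 2 = -i + 1 by ring, sub_add_cancel] at hu' hv'
    linear_combination hv' - hu' + ih.2 - x * ih.1

lemma casoratian (hy : y ≠ 0) (hu : IsFibRec x y u) (hv : IsFibRec x y v) (n : ℤ) :
    u (n + 1) * v n - u n * v (n + 1) = (-y) ^ n * (u 1 * v 0 - u 0 * v 1) := by
  have hW := eq_zpow_mul_of_forall_add_one (f := fun m ↦ u (m + 1) * v m - u m * v (m + 1))
    (neg_ne_zero.mpr hy) (fun m ↦ by simp only [add_assoc, one_add_one_eq_two, hu m, hv m]; ring) n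
  simpa only [zero_add] using hW

end IsFibRec

variable (x y)

lemma zF_natCast (n : ℕ) : zF x y n = bF x y n := by
  simp [zF]

lemma zF_neg_natCast (n : ℕ) : zF x y (-n) = -(-y) ^ (-(n : ℤ)) * bF x y n := by
  rcases n with _ | n
  · simp [zF, bF]
  · rw [zF, if_neg (by omega), neg_neg, Int.toNat_natCast]

lemma zF_zero : zF x y 0 = 0 := by simp [zF, bF]

lemma zF_one : zF x y 1 = 1 := by simp [zF, bF]

lemma zF_two : zF x y 2 = x := by simp [zF, bF]

variable {y}

lemma isFibRec_zF (hy : y ≠ 0) : IsFibRec x y (zF x y) := by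
  -- cases `n ≥ 0`, `n = -1` (straddling both branches of `zF`) and `n ≤ -2`
  rintro (n | _ | n)
  · have h1 := zF_natCast x y (n + 1)
    have h2 := zF_natCast x y (n + 2)
    push_cast at h1 h2
    rw [Int.ofNat_eq_natCast, h1, h2, zF_natCast]
    rfl
  · have h : zF x y (-1) = y⁻¹ := by simpa [bF] using zF_neg_natCast x y 1
    show zF x y (-1 + 2) = x * zF x y (-1 + 1) + y * zF x y (-1)
    norm_num [h, zF_zero, zF_one, hy]
  · have hn : Int.negSucc (n + 1) = -((n + 2 : ℕ) : ℤ) := by omega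
    rw [hn, show -((n + 2 : ℕ) : ℤ) + 2 = -(n : ℤ) by push_cast; ring,
      show -((n + 2 : ℕ) : ℤ) + 1 = -((n + 1 : ℕ) : ℤ) by push_cast; ring]
    simp only [zF_neg_natCast, zpow_neg, zpow_natCast, pow_succ]
    have hb : bF x y (n + 2) = x * bF x y (n + 1) + y * bF x y n := rfl
    have hny : -y ≠ 0 := neg_ne_zero.mpr hy
    field_simp
    linear_combination hb

lemma zF_add (hy : y ≠ 0) (n k : ℤ) :
    zF x y (n + k) = zF x y k * zF x y (n + 1) + y * zF x y (k - 1) * zF x y n := by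
  have hF := isFibRec_zF x hy
  have h := (hF.comp_add_const k).ext_zero_one hy
    ((hF.comp_add_const 1).mul_add_mul hF (zF x y k) (y * zF x y (k - 1)))
    (by simp [zF_zero, zF_one])
    (by
      have hk := hF (k - 1)
      rw [show k - 1 + 2 = 1 + k by ring, sub_add_cancel] at hk
      simp only [one_add_one_eq_two, zF_two, zF_one, hk]
      ring)
  exact congrFun h n

lemma zF_mul_zF_sub_zF_mul_zF (hy : y ≠ 0) (s d k : ℤ) :
    zF x y (s + d) * zF x y (s + k) - zF x y (s + d + k) * zF x y s =
      (-y) ^ s * zF x y d * zF x y k := by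
  have hW := (isFibRec_zF x hy).casoratian hy ((isFibRec_zF x hy).comp_add_const d) s
  simp only [zF_zero, zF_one, zero_add, add_right_comm s 1 d] at hW
  rw [zF_add x hy s k, zF_add x hy (s + d) k]
  linear_combination zF x y k * hW

end Recurrence

/-- F_M F_N − F_{M+K} F_{N−K} = (−y)^{N−K} F_{M+K−N} F_K. -/
theorem fib_index_reduction_special {K : Type*} [Field K] (x y : K) (hy : y ≠ 0)
    (M N k : ℤ) :
    zF x y M * zF x y N - zF x y (M + k) * zF x y (N - k) =
      (-y) ^ (N - k) * zF x y (M + k - N) * zF x y k := by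
  have h := zF_mul_zF_sub_zF_mul_zF x hy (N - k) (M + k - N) k
  rwa [show N - k + (M + k - N) = M by ring, sub_add_cancel] at h
end

section
/- For all s ≥ 1, t ≥ 0, i ≥ 0 and every integer m (with y invertible), Σ_{j=0}^{i} (−1)^{(sj+2(s+1))(j+1)/2} · C(t+1,j)_{F_s(x,y)} · L_{ts(i−j)+m}(x,y) · y^{sj(j−1)/2} = (−1)^{s+i+1+si(i+1)/2} · C(t,i)_{F_s(x,y)} · L_{m−is}(x,y) · y^{si(i+1)/2}, where C(t,i)_{F_s} = 0 when i > t. -/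
/-- Bivariate Lucas polynomials. -/
def bL {K : Type*} [Field K] (x y : K) : ℕ → K
  | 0 => 2
  | 1 => x
  | n + 2 => x * bL x y (n + 1) + y * bL x y n

/-- Bivariate Lucas polynomials extended to all integer indices. -/
noncomputable def zL {K : Type*} [Field K] (x y : K) (n : ℤ) : K :=
  if 0 ≤ n then bL x y n.toNat else (-y) ^ n * bL x y (-n).toNat

/-- The bivariate s-Fibopolynomial (equal to 0 when k > n, since F_0 = 0
appears in the numerator). -/
noncomputable def fibo {K : Type*} [Field K] (x y : K) (s n k : ℕ) : K :=
  (∏ i ∈ Finset.range k, bF x y (s * (n - i))) / ∏ i ∈ Finset.range k, bF x y (s * (i + 1))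

/-- The field ℚ(x,y) of rational functions in two variables. -/
noncomputable abbrev RF2 : Type := FractionRing (MvPolynomial (Fin 2) ℚ)

noncomputable def Xv : RF2 := algebraMap (MvPolynomial (Fin 2) ℚ) RF2 (MvPolynomial.X 0)
noncomputable def Yv : RF2 := algebraMap (MvPolynomial (Fin 2) ℚ) RF2 (MvPolynomial.X 1)

section Lucas

variable {K : Type*} [Field K] (x y : K)

@[simp] lemma bF_zero : bF x y 0 = 0 := rfl
@[simp] lemma bF_one : bF x y 1 = 1 := rfl
lemma bF_add_two (n : ℕ) : bF x y (n + 2) = x * bF x y (n + 1) + y * bF x y n := rfl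

lemma bL_add_two (n : ℕ) : bL x y (n + 2) = x * bL x y (n + 1) + y * bL x y n := rfl

lemma zL_natCast (n : ℕ) : zL x y n = bL x y n := by simp [zL]

lemma zL_neg_natCast (n : ℕ) : zL x y (-n) = (-y) ^ (-n : ℤ) * bL x y n := by
  rcases n.eq_zero_or_pos with rfl | hn
  · simp [zL]
  · simp [zL, hn.ne']

variable {y}

lemma zL_add_two (hy : y ≠ 0) (n : ℤ) : zL x y (n + 2) = x * zL x y (n + 1) + y * zL x y n := by
  rcases le_or_gt 0 n with hn | hn
  · lift n to ℕ using hn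
    have h := bL_add_two x y n
    rw [← zL_natCast, ← zL_natCast, ← zL_natCast] at h
    exact_mod_cast h
  obtain rfl | ⟨k, rfl⟩ : n = -1 ∨ ∃ k : ℕ, n = -(k + 2 : ℕ) :=
    (eq_or_lt_of_le (by omega : n ≤ -1)).imp id fun h => ⟨(-n - 2).toNat, by omega⟩
  · simp [zL, bL, hy]
    ring
  · have hy' : -y ≠ 0 := neg_ne_zero.mpr hy
    have e2 : -((k + 2 : ℕ) : ℤ) + 2 = -(k : ℕ) := by push_cast; ring
    have e1 : -((k + 2 : ℕ) : ℤ) + 1 = -(k + 1 : ℕ) := by push_cast; ring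
    rw [e2, e1, zL_neg_natCast, zL_neg_natCast, zL_neg_natCast, bL_add_two]
    have p2 : (-y) ^ (-(k : ℕ) : ℤ) = (-y) ^ (-(k + 2 : ℕ) : ℤ) * (-y) ^ 2 := by
      rw [← zpow_natCast, ← zpow_add₀ hy']; push_cast; ring_nf
    have p1 : (-y) ^ (-(k + 1 : ℕ) : ℤ) = (-y) ^ (-(k + 2 : ℕ) : ℤ) * (-y) := by
      rw [← zpow_add_one₀ hy']; push_cast; ring_nf
    rw [p2, p1]
    ring

lemma bF_succ_mul_zL (hy : y ≠ 0) (A : ℕ) (m : ℤ) :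
    bF x y (A + 1) * zL x y m = bF x y A * zL x y (m + 1) + (-y) ^ A * zL x y (m - A) := by
  induction A using Nat.twoStepInduction generalizing m with
  | zero => simp
  | one =>
    have h := zL_add_two x hy (m - 1)
    rw [sub_add_cancel, show m - 1 + 2 = m + 1 by ring] at h
    rw [bF_add_two, bF_one, bF_zero]
    push_cast
    linear_combination -h
  | more A ih0 ih1 =>
    have h := zL_add_two x hy (m - (A + 2 : ℕ))
    rw [show m - (A + 2 : ℕ) + 2 = m - A by push_cast; ring,
      show m - (A + 2 : ℕ) + 1 = m - (A + 1 : ℕ) by push_cast; ring] at h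
    rw [bF_add_two]
    linear_combination x * ih1 m + y * ih0 m + y * (-y) ^ A * h -
      zL x y (m + 1) * (bF_add_two x y A : bF x y (A + 1 + 1) = _)

lemma bF_add_mul_zL (hy : y ≠ 0) (A B : ℕ) (m : ℤ) :
    bF x y (A + B) * zL x y m =
      bF x y A * zL x y (m + B) + (-y) ^ A * bF x y B * zL x y (m - A) := by
  induction B using Nat.twoStepInduction with
  | zero => simp
  | one => simpa using bF_succ_mul_zL x hy A m
  | more B ih0 ih1 =>
    have h := zL_add_two x hy (m + B)
    rw [← add_assoc, bF_add_two, bF_add_two]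
    push_cast at ih1 ⊢
    simp only [← add_assoc] at ih1 ⊢
    linear_combination x * ih1 + y * ih0 - bF x y A * h

end Lucas

section Fibo

variable {K : Type*} [Field K] (x : K) {y : K} (s : ℕ)

lemma fibo_zero (n : ℕ) : fibo x y s n 0 = 1 := by simp [fibo]

lemma fibo_succ (n k : ℕ) :
    fibo x y s n (k + 1) = fibo x y s n k * bF x y (s * (n - k)) / bF x y (s * (k + 1)) := by
  rw [fibo, fibo, Finset.prod_range_succ, Finset.prod_range_succ, mul_div_mul_comm, mul_div_assoc]

lemma fibo_succ_succ (n k : ℕ) :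
    fibo x y s (n + 1) (k + 1) = fibo x y s n k * bF x y (s * (n + 1)) / bF x y (s * (k + 1)) := by
  rw [fibo, fibo, Finset.prod_range_succ' (fun j => bF x y (s * (n + 1 - j))),
    Finset.prod_range_succ, mul_div_mul_comm, mul_div_assoc]
  simp

lemma fibo_eq_zero_of_lt {n k : ℕ} (h : n < k) : fibo x y s n k = 0 := by
  rw [fibo, Finset.prod_eq_zero (Finset.mem_range.mpr h) (by simp), zero_div]

lemma fibo_mul_zL_sub_fibo_succ_succ_mul_zL (hy : y ≠ 0) (t i : ℕ) (m : ℤ)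
    (hF : bF x y (s * (i + 1)) ≠ 0) :
    fibo x y s t i * zL x y (m + (t * s : ℕ) - (i * s : ℕ)) -
        fibo x y s (t + 1) (i + 1) * zL x y m =
      -(-y) ^ (s * (i + 1)) * fibo x y s t (i + 1) * zL x y (m - ((i + 1) * s : ℕ)) := by
  rcases le_or_gt i t with hit | hit
  · have h := bF_add_mul_zL x hy (s * (i + 1)) (s * (t - i)) m
    rw [← mul_add, show i + 1 + (t - i) = t + 1 by omega,
      show m + (s * (t - i) : ℕ) = m + (t * s : ℕ) - (i * s : ℕ) by push_cast [hit]; ring,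
      show m - (s * (i + 1) : ℕ) = m - ((i + 1) * s : ℕ) by push_cast; ring] at h
    rw [fibo_succ_succ, fibo_succ]
    field_simp
    linear_combination (-fibo x y s t i) * h
  · simp [fibo_eq_zero_of_lt, hit, hit.trans (Nat.lt_succ_self i)]

end Fibo

theorem sum_neg_one_pow_mul_fibo_mul_zL {K : Type*} [Field K] (x : K) {y : K} (hy : y ≠ 0)
    {s : ℕ} (t : ℕ) (hF : ∀ k, bF x y (s * (k + 1)) ≠ 0) (i : ℕ) (m : ℤ) :
    (∑ j ∈ Finset.range (i + 1),
        (-1 : K) ^ (((s * j + 2 * (s + 1)) * (j + 1)) / 2) *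
          fibo x y s (t + 1) j *
            zL x y ((t * s * (i - j) : ℕ) + m) * y ^ ((s * j * (j - 1)) / 2)) =
      (-1 : K) ^ (s + i + 1 + (s * i * (i + 1)) / 2) *
        fibo x y s t i * zL x y (m - (i * s : ℕ)) * y ^ ((s * i * (i + 1)) / 2) := by
  induction i generalizing m with
  | zero => simp [fibo_zero]
  | succ i ih =>
    have hshift : ∀ j ∈ Finset.range (i + 1),
        ((t * s * (i + 1 - j) : ℕ) : ℤ) + m = (t * s * (i - j) : ℕ) + (m + (t * s : ℕ)) := by
      intro j hj
      rw [show i + 1 - j = i - j + 1 by have := Finset.mem_range.mp hj; omega]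
      push_cast
      ring
    rw [Finset.sum_range_succ, Finset.sum_congr rfl fun j hj => by rw [hshift j hj], ih]
    set e := s * i * (i + 1) / 2
    -- the new last term has the sign `-(-1) ^ (s + i + 1 + e)` and the power `y ^ e`
    have hlast : (s * (i + 1) + 2 * (s + 1)) * (i + 1 + 1) / 2 =
        s + i + 1 + e + 1 + 2 * (s * i + s) := by
      rw [show (s * (i + 1) + 2 * (s + 1)) * (i + 1 + 1) =
        s * i * (i + 1) + 2 * (s + i + 1 + 1 + 2 * (s * i + s)) by ring,
        Nat.add_mul_div_left _ _ two_pos]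
      ring
    have hrhs : s * (i + 1) * (i + 1 + 1) / 2 = e + s * (i + 1) := by
      rw [show s * (i + 1) * (i + 1 + 1) = s * i * (i + 1) + 2 * (s * (i + 1)) by ring,
        Nat.add_mul_div_left _ _ two_pos]
    have hpow : s * (i + 1) * (i + 1 - 1) / 2 = e := by
      rw [Nat.add_sub_cancel, mul_right_comm]
    have hstep := fibo_mul_zL_sub_fibo_succ_succ_mul_zL x s hy t i m (hF i)
    rw [hlast, hrhs, hpow, pow_add _ (s + i + 1 + e + 1), (even_two_mul _).neg_one_pow, mul_one,
      Nat.sub_self, mul_zero, Nat.cast_zero, zero_add]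
    linear_combination (-1 : K) ^ (s + i + 1 + e) * y ^ e * hstep

/-- `bF` over a commutative ring, so that `x = y = 1` can be substituted in `ℚ[x, y]`. -/
def fibPoly {R : Type*} [CommRing R] (x y : R) : ℕ → R
  | 0 => 0
  | 1 => 1
  | n + 2 => x * fibPoly x y (n + 1) + y * fibPoly x y n

section fibPoly

variable {R S : Type*} [CommRing R] [CommRing S]

lemma map_fibPoly (f : R →+* S) (x y : R) (n : ℕ) :
    f (fibPoly x y n) = fibPoly (f x) (f y) n := by
  induction n using Nat.twoStepInduction with
  | zero => exact map_zero f
  | one => exact map_one f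
  | more n ih0 ih1 => simp only [fibPoly, map_add, map_mul, ih0, ih1]

lemma fibPoly_one_one (n : ℕ) : fibPoly (1 : R) 1 n = Nat.fib n := by
  induction n using Nat.twoStepInduction with
  | zero => simp [fibPoly]
  | one => simp [fibPoly]
  | more n ih0 ih1 => simp [fibPoly, ih0, ih1, Nat.fib_add_two, add_comm]

lemma bF_eq_fibPoly {K : Type*} [Field K] (x y : K) (n : ℕ) : bF x y n = fibPoly x y n := by
  induction n using Nat.twoStepInduction with
  | zero => rfl
  | one => rfl
  | more n ih0 ih1 => rw [bF_add_two, fibPoly, ih0, ih1]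

end fibPoly

lemma Yv_ne_zero : Yv ≠ 0 :=
  (map_ne_zero_iff _ (IsFractionRing.injective _ _)).mpr (MvPolynomial.X_ne_zero 1)

lemma bF_Xv_Yv_ne_zero {n : ℕ} (hn : n ≠ 0) : bF Xv Yv n ≠ 0 := by
  rw [bF_eq_fibPoly, Xv, Yv, ← map_fibPoly, map_ne_zero_iff _ (IsFractionRing.injective _ _)]
  intro h
  have := congrArg (MvPolynomial.eval fun _ => (1 : ℚ)) h
  rw [map_fibPoly, MvPolynomial.eval_X, MvPolynomial.eval_X, fibPoly_one_one, map_zero] at this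
  exact Nat.fib_pos.mpr (Nat.pos_of_ne_zero hn) |>.ne' (by exact_mod_cast this)

/-- Σ_{j=0}^{i} (−1)^{(sj+2(s+1))(j+1)/2} C(t+1,j)_{F_s} L_{ts(i−j)+m} y^{sj(j−1)/2}
  = (−1)^{s+i+1+si(i+1)/2} C(t,i)_{F_s} L_{m−is} y^{si(i+1)/2}. -/
theorem fibopolynomial_lucas_alternating_sum (s t i : ℕ) (m : ℤ) (hs : 1 ≤ s) :
    (∑ j ∈ Finset.range (i + 1),
        (-1 : RF2) ^ (((s * j + 2 * (s + 1)) * (j + 1)) / 2) *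
          fibo Xv Yv s (t + 1) j *
            zL Xv Yv ((t * s * (i - j) : ℕ) + m) * Yv ^ ((s * j * (j - 1)) / 2)) =
      (-1 : RF2) ^ (s + i + 1 + (s * i * (i + 1)) / 2) *
        fibo Xv Yv s t i * zL Xv Yv (m - (i * s : ℕ)) * Yv ^ ((s * i * (i + 1)) / 2) :=
  sum_neg_one_pow_mul_fibo_mul_zL Xv Yv_ne_zero t
    (fun k => bF_Xv_Yv_ne_zero (Nat.mul_ne_zero (by omega) k.succ_ne_zero)) i m
end
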